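/- Define f : ℕ → ℕ by f(0) = 1 and f(n) = |PIL(n)| for n ≥ 1. Then for every n ≥ 1, f(n+1) + (n² − n)·f(n−1) = (2n+1)·f(n). -/

import Mathlib

open scoped BigOperators

noncomputable section

/-- `P` is a partition of the finite set `A` into (nonempty, duplicate-free) lists:
every element of `A` appears exactly once in exactly one of the lists of `P`. -/
def IsPIL (A : Finset ℕ) (P : Finset (List ℕ)) : Prop :=
  (∀ l ∈ P, l.Nodup ∧ l ≠ []) ∧
  (∀ l ∈ P, ∀ l' ∈ P, l ≠ l' → Disjoint l.toFinset l'.toFinset) ∧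
  P.biUnion (fun l => l.toFinset) = A

/-- `|PIL(n)|`: the number of partitions of `{1, …, n}` into lists. -/
def pilCount (n : ℕ) : ℕ := Set.ncard {P : Finset (List ℕ) | IsPIL (Finset.Icc 1 n) P}

/-- `f(0) = 1` and `f(n) = |PIL(n)|` for `n ≥ 1`. -/
def fPIL : ℕ → ℕ := fun n => if n = 0 then 1 else pilCount n

namespace PIL6

abbrev PSet := Finset (List ℕ)

def pil (A : Finset ℕ) : Set PSet := {P | IsPIL A P}
def prs (A : Finset ℕ) : Set (PSet × ℕ) := {q | IsPIL A q.1 ∧ q.2 ∈ A}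
def mks (A : Finset ℕ) : Set (PSet × List ℕ) := {q | IsPIL A q.1 ∧ q.2 ∈ q.1}

variable {A : Finset ℕ} {P Q : PSet} {l l' m : List ℕ} {a x y : ℕ}

lemma _root_.IsPIL.nodup (h : IsPIL A P) (hl : l ∈ P) : l.Nodup := (h.1 l hl).1
lemma _root_.IsPIL.ne_nil (h : IsPIL A P) (hl : l ∈ P) : l ≠ [] := (h.1 l hl).2
lemma _root_.IsPIL.disj (h : IsPIL A P) (hl : l ∈ P) (hl' : l' ∈ P) (hne : l ≠ l') :
    Disjoint l.toFinset l'.toFinset := h.2.1 l hl l' hl' hne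
lemma _root_.IsPIL.ground (h : IsPIL A P) : P.biUnion (fun l => l.toFinset) = A := h.2.2

lemma _root_.IsPIL.mem_ground (h : IsPIL A P) (hl : l ∈ P) (hx : x ∈ l) : x ∈ A := by
  rw [← h.ground]
  exact Finset.mem_biUnion.2 ⟨l, hl, List.mem_toFinset.2 hx⟩

lemma _root_.IsPIL.exists_list (h : IsPIL A P) (hx : x ∈ A) : ∃ l ∈ P, x ∈ l := by
  rw [← h.ground] at hx
  obtain ⟨l, hl, hxl⟩ := Finset.mem_biUnion.1 hx
  exact ⟨l, hl, List.mem_toFinset.1 hxl⟩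

lemma _root_.IsPIL.eq_of_mem_mem (h : IsPIL A P) (hl : l ∈ P) (hl' : l' ∈ P) (hx : x ∈ l)
    (hx' : x ∈ l') : l = l' := by
  by_contra hne
  exact Finset.disjoint_left.1 (h.disj hl hl' hne) (List.mem_toFinset.2 hx)
    (List.mem_toFinset.2 hx')

lemma _root_.IsPIL.nil_not_mem (h : IsPIL A P) : [] ∉ P := fun hm => h.ne_nil hm rfl

/-- the unique list of `P` containing `x` (junk value `[]` if none). -/
noncomputable def listOf (P : PSet) (x : ℕ) : List ℕ :=
  if h : ∃ l ∈ P, x ∈ l then h.choose else []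

lemma listOf_spec (h : ∃ l ∈ P, x ∈ l) : listOf P x ∈ P ∧ x ∈ listOf P x := by
  rw [listOf, dif_pos h]
  exact ⟨h.choose_spec.1, h.choose_spec.2⟩

lemma _root_.IsPIL.listOf_eq (h : IsPIL A P) (hl : l ∈ P) (hx : x ∈ l) : listOf P x = l := by
  have he : ∃ l ∈ P, x ∈ l := ⟨l, hl, hx⟩
  obtain ⟨h1, h2⟩ := listOf_spec he
  exact h.eq_of_mem_mem h1 hl h2 hx

lemma _root_.IsPIL.listOf_mem (h : IsPIL A P) (hx : x ∈ A) : listOf P x ∈ P :=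
  (listOf_spec (h.exists_list hx)).1

lemma _root_.IsPIL.mem_listOf (h : IsPIL A P) (hx : x ∈ A) : x ∈ listOf P x :=
  (listOf_spec (h.exists_list hx)).2

lemma toFinset_erase_of_nodup (h : l.Nodup) (a : ℕ) :
    (l.erase a).toFinset = l.toFinset.erase a := by
  ext z
  simp [List.Nodup.mem_erase_iff h, Finset.mem_erase, and_comm]

lemma _root_.IsPIL.biUnion_erase (h : IsPIL A P) (hl : l ∈ P) :
    A = l.toFinset ∪ (P.erase l).biUnion (fun m => m.toFinset) := by
  conv_lhs => rw [← h.ground, ← Finset.insert_erase hl]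
  rw [Finset.biUnion_insert]

lemma _root_.IsPIL.not_mem_biUnion_erase (h : IsPIL A P) (hl : l ∈ P) (hx : x ∈ l) :
    x ∉ (P.erase l).biUnion (fun m => m.toFinset) := by
  intro hmem
  obtain ⟨m, hm, hxm⟩ := Finset.mem_biUnion.1 hmem
  have hmP := Finset.mem_of_mem_erase hm
  have hne := Finset.ne_of_mem_erase hm
  have hdisj := h.disj hmP hl hne
  exact Finset.disjoint_left.1 hdisj hxm (List.mem_toFinset.2 hx)


/-! ### List splitting at the (unique) occurrence of an element -/

/-- part of `l` before `x` -/
def twl (x : ℕ) (l : List ℕ) : List ℕ := l.takeWhile (fun z => z ≠ x)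
/-- part of `l` after `x` -/
def tll (x : ℕ) (l : List ℕ) : List ℕ := (l.dropWhile (fun z => z ≠ x)).tail

lemma split_eval (x : ℕ) {u : List ℕ} (v : List ℕ) (hu : x ∉ u) :
    twl x (u ++ x :: v) = u ∧ tll x (u ++ x :: v) = v := by
  induction u with
  | nil => simp [twl, tll]
  | cons z t ih =>
    have hz : z ≠ x := fun h => hu (h ▸ (List.mem_cons_self (a := z) (l := t)))
    have ht : x ∉ t := fun h => hu (List.mem_cons_of_mem _ h)
    obtain ⟨ih1, ih2⟩ := ih ht
    constructor
    · simpa [twl, List.takeWhile_cons, hz] using ih1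
    · simpa [tll, List.dropWhile_cons, hz] using ih2

lemma twl_eval (x : ℕ) {u : List ℕ} (v : List ℕ) (hu : x ∉ u) :
    twl x (u ++ x :: v) = u := (split_eval x v hu).1

lemma tll_eval (x : ℕ) {u : List ℕ} (v : List ℕ) (hu : x ∉ u) :
    tll x (u ++ x :: v) = v := (split_eval x v hu).2

lemma split_of_mem {x : ℕ} {l : List ℕ} (h : x ∈ l) :
    l = twl x l ++ x :: tll x l ∧ x ∉ twl x l := by
  induction l with
  | nil => simp at h
  | cons z t ih =>
    by_cases hz : z = x
    · subst hz
      constructor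
      · simp [twl, tll, List.takeWhile_cons, List.dropWhile_cons]
      · simp [twl, List.takeWhile_cons]
    · have hx : x ∈ t := by
        rcases List.mem_cons.1 h with h' | h'
        · exact absurd h'.symm hz
        · exact h'
      obtain ⟨ih1, ih2⟩ := ih hx
      constructor
      · simp only [twl, tll, List.takeWhile_cons, List.dropWhile_cons]
        simp only [hz, decide_eq_true_eq, if_pos, ne_eq, not_false_iff]
        simpa [twl, tll] using ih1
      · simp only [twl, List.takeWhile_cons]
        simp only [hz, ne_eq, decide_eq_true_eq, not_false_iff, if_pos]
        intro hmem
        rcases List.mem_cons.1 hmem with h' | h'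
        · exact hz h'.symm
        · exact ih2 h'

/-! ### Surgery operations -/

/-- replace list `l` by `l'` in `P` -/
def rep (P : PSet) (l l' : List ℕ) : PSet := insert l' (P.erase l)

/-- delete element `a` from the partition `P` -/
noncomputable def del (a : ℕ) (P : PSet) : PSet :=
  if (listOf P a).erase a = [] then P.erase (listOf P a)
  else rep P (listOf P a) ((listOf P a).erase a)

lemma rep_isPIL (hP : IsPIL A Q) (hl : l ∈ Q) (hperm : l'.Perm (a :: l)) (ha : a ∉ A) :
    IsPIL (insert a A) (rep Q l l') := by
  have hal : a ∉ l := fun h => ha (hP.mem_ground hl h)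
  have hnd : (a :: l).Nodup := List.nodup_cons.2 ⟨hal, hP.nodup hl⟩
  have hnd' : l'.Nodup := hperm.symm.nodup hnd
  have hne' : l' ≠ [] := List.ne_nil_of_mem (hperm.mem_iff.2 ((List.mem_cons_self (a := a) (l := l))))
  have htf : l'.toFinset = insert a l.toFinset := by
    rw [List.toFinset_eq_of_perm _ _ hperm, List.toFinset_cons]
  have hkey : ∀ m ∈ Q.erase l, a ∉ m := by
    intro m hm hmem
    exact ha (hP.mem_ground (Finset.mem_of_mem_erase hm) hmem)
  refine ⟨?_, ?_, ?_⟩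
  · intro m hm
    rcases Finset.mem_insert.1 hm with h | h
    · exact h ▸ ⟨hnd', hne'⟩
    · exact hP.1 m (Finset.mem_of_mem_erase h)
  · intro m hm m' hm' hne
    have main : ∀ m'' ∈ Q.erase l, Disjoint l'.toFinset m''.toFinset := by
      intro m'' hm''
      rw [htf, Finset.disjoint_left]
      intro z hz
      rcases Finset.mem_insert.1 hz with h | h
      · subst h
        exact fun hc => hkey m'' hm'' (List.mem_toFinset.1 hc)
      · have hdisj := hP.disj hl (Finset.mem_of_mem_erase hm'')
          (Ne.symm (Finset.ne_of_mem_erase hm''))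
        exact fun hc => Finset.disjoint_left.1 hdisj h hc
    rcases Finset.mem_insert.1 hm with h1 | h1 <;> rcases Finset.mem_insert.1 hm' with h2 | h2
    · exact absurd (h1.trans h2.symm) hne
    · exact h1 ▸ main m' h2
    · exact (h2 ▸ main m h1).symm
    · exact hP.disj (Finset.mem_of_mem_erase h1) (Finset.mem_of_mem_erase h2) hne
  · rw [rep, Finset.biUnion_insert, htf, Finset.insert_union, ← hP.biUnion_erase hl]

lemma del_isPIL (hP : IsPIL A P) (ha : a ∈ A) : IsPIL (A.erase a) (del a P) := by
  set l := listOf P a with hldef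
  have hlP : l ∈ P := hP.listOf_mem ha
  have hal : a ∈ l := hP.mem_listOf ha
  have hnd : l.Nodup := hP.nodup hlP
  have hAeq : A.erase a = (l.toFinset.erase a) ∪ (P.erase l).biUnion (fun m => m.toFinset) := by
    rw [hP.biUnion_erase hlP, Finset.erase_union_distrib,
      Finset.erase_eq_of_notMem (fun h => hP.not_mem_biUnion_erase hlP hal h)]
  by_cases hcase : l.erase a = []
  · have hla : l = [a] := by
      have h2 := List.perm_cons_erase hal
      rw [hcase] at h2
      exact List.perm_singleton.1 h2
    rw [del, ← hldef, if_pos hcase]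
    refine ⟨fun m hm => hP.1 m (Finset.mem_of_mem_erase hm),
      fun m hm m' hm' hne => hP.disj (Finset.mem_of_mem_erase hm) (Finset.mem_of_mem_erase hm') hne, ?_⟩
    rw [hAeq]
    have : l.toFinset.erase a = ∅ := by rw [hla]; simp
    rw [this, Finset.empty_union]
  · rw [del, ← hldef, if_neg hcase]
    have htf : (l.erase a).toFinset = l.toFinset.erase a := toFinset_erase_of_nodup hnd a
    refine ⟨?_, ?_, ?_⟩
    · intro m hm
      rcases Finset.mem_insert.1 hm with h | h
      · exact h ▸ ⟨hnd.erase a, hcase⟩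
      · exact hP.1 m (Finset.mem_of_mem_erase h)
    · intro m hm m' hm' hne
      have main : ∀ m'' ∈ P.erase l, Disjoint (l.erase a).toFinset m''.toFinset := by
        intro m'' hm''
        refine Finset.disjoint_left.2 fun z hz hz' => ?_
        rw [htf] at hz
        have hdisj := hP.disj hlP (Finset.mem_of_mem_erase hm'')
          (Ne.symm (Finset.ne_of_mem_erase hm''))
        exact Finset.disjoint_left.1 hdisj (Finset.mem_of_mem_erase hz) hz'
      rcases Finset.mem_insert.1 hm with h1 | h1 <;> rcases Finset.mem_insert.1 hm' with h2 | h2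
      · exact absurd (h1.trans h2.symm) hne
      · exact h1 ▸ main m' h2
      · exact (h2 ▸ main m h1).symm
      · exact hP.disj (Finset.mem_of_mem_erase h1) (Finset.mem_of_mem_erase h2) hne
    · rw [rep, Finset.biUnion_insert, htf, hAeq]


lemma erase_mid {u v : List ℕ} (hu : a ∉ u) : (u ++ a :: v).erase a = u ++ v := by
  rw [List.erase_append_right _ hu, List.erase_cons_head]

lemma not_mem_sides {u v : List ℕ} (h : (u ++ a :: v).Nodup) : a ∉ u ∧ a ∉ v := by
  have hd := List.disjoint_of_nodup_append h
  have hv : (a :: v).Nodup := h.of_append_right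
  exact ⟨fun hmem => hd hmem ((List.mem_cons_self (a := a) (l := v))), (List.nodup_cons.1 hv).1⟩

lemma not_mem_of_elem (hQ : IsPIL A Q) (ha : a ∉ A) (hal : a ∈ l') : l' ∉ Q :=
  fun h => ha (hQ.mem_ground h hal)

lemma erase_not_mem_erase (hP : IsPIL A P) (hl : l ∈ P) (hne : l.erase a ≠ []) :
    l.erase a ∉ P.erase l := by
  intro hmem
  obtain ⟨z, hz⟩ := List.exists_mem_of_ne_nil _ hne
  have hzl : z ∈ l := List.mem_of_mem_erase hz
  have hdisj := hP.disj (Finset.mem_of_mem_erase hmem) hl (Finset.ne_of_mem_erase hmem)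
  exact Finset.disjoint_left.1 hdisj (List.mem_toFinset.2 hz) (List.mem_toFinset.2 hzl)

lemma del_rep (hQ : IsPIL A Q) (hl : l ∈ Q) (hperm : l'.Perm (a :: l)) (ha : a ∉ A)
    (herase : l'.erase a = l) : del a (rep Q l l') = Q := by
  have hR : IsPIL (insert a A) (rep Q l l') := rep_isPIL hQ hl hperm ha
  have hal' : a ∈ l' := hperm.mem_iff.2 ((List.mem_cons_self (a := a) (l := l)))
  have hlistOf : listOf (rep Q l l') a = l' := hR.listOf_eq (Finset.mem_insert_self _ _) hal'
  have hlne : l ≠ [] := hQ.ne_nil hl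
  have hnotmem : l' ∉ Q.erase l := fun h => not_mem_of_elem hQ ha hal' (Finset.mem_of_mem_erase h)
  rw [del, hlistOf, herase, if_neg hlne, rep, rep, Finset.erase_insert hnotmem,
    Finset.insert_erase hl]

lemma del_eq_rep (hne : (listOf P a).erase a ≠ []) :
    del a P = insert ((listOf P a).erase a) (P.erase (listOf P a)) := by
  rw [del, if_neg hne, rep]

lemma insert_singleton_isPIL (hQ : IsPIL A Q) (ha : a ∉ A) :
    IsPIL (insert a A) (insert [a] Q) := by
  refine ⟨?_, ?_, ?_⟩
  · intro m hm
    rcases Finset.mem_insert.1 hm with h | h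
    · subst h; exact ⟨List.nodup_singleton a, by simp⟩
    · exact hQ.1 m h
  · intro m hm m' hm' hne
    have main : ∀ m'' ∈ Q, Disjoint ([a] : List ℕ).toFinset m''.toFinset := by
      intro m'' hm''
      refine Finset.disjoint_left.2 fun z hz hz' => ?_
      have : z = a := by simpa using hz
      subst this
      exact ha (hQ.mem_ground hm'' (List.mem_toFinset.1 hz'))
    rcases Finset.mem_insert.1 hm with h1 | h1 <;> rcases Finset.mem_insert.1 hm' with h2 | h2
    · exact absurd (h1.trans h2.symm) hne
    · exact h1 ▸ main m' h2
    · exact (h2 ▸ main m h1).symm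
    · exact hQ.disj h1 h2 hne
  · rw [Finset.biUnion_insert, hQ.ground]
    simp [Finset.insert_union, Finset.insert_eq, -Finset.singleton_union]

/-! ### Finiteness -/

/-- all duplicate-free lists with entries in `A` -/
def lists (A : Finset ℕ) : Finset (List ℕ) :=
  A.powerset.biUnion (fun B => B.toList.permutations.toFinset)

lemma mem_lists (hnd : l.Nodup) (hsub : l.toFinset ⊆ A) : l ∈ lists A := by
  refine Finset.mem_biUnion.2 ⟨l.toFinset, Finset.mem_powerset.2 hsub, ?_⟩
  rw [List.mem_toFinset, List.mem_permutations]
  exact List.perm_of_nodup_nodup_toFinset_eq hnd (Finset.nodup_toList _)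
    (by rw [Finset.toList_toFinset])

lemma pil_finite (A : Finset ℕ) : (pil A).Finite := by
  refine Set.Finite.subset (Finset.finite_toSet ((lists A).powerset)) ?_
  intro P hP
  simp only [Finset.coe_powerset, Set.mem_preimage, Set.mem_powerset_iff]
  intro l hl
  have hlP : l ∈ P := by simpa using hl
  exact mem_lists (hP.nodup hlP) (fun z hz => hP.mem_ground hlP (List.mem_toFinset.1 hz))

lemma prs_finite (A : Finset ℕ) : (prs A).Finite := by
  refine Set.Finite.subset ((pil_finite A).prod (Finset.finite_toSet A)) ?_
  intro q hq
  exact ⟨hq.1, hq.2⟩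

lemma mks_finite (A : Finset ℕ) : (mks A).Finite := by
  refine Set.Finite.subset ((pil_finite A).prod (Finset.finite_toSet (lists A))) ?_
  rintro ⟨P, l⟩ ⟨h1, h2⟩
  exact ⟨h1, by
    simpa using mem_lists (h1.nodup h2) (fun z hz => h1.mem_ground h2 (List.mem_toFinset.1 hz))⟩

/-! ### ncard tools -/

lemma bij_ncard {α β : Type*} {s : Set α} {t : Set β} {f : α → β} (h : Set.BijOn f s t) :
    s.ncard = t.ncard := by
  rw [← h.image_eq]
  exact (Set.ncard_image_of_injOn h.injOn).symm

lemma ncard_prod {α β : Type*} (s : Set α) (t : Set β) :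
    (s ×ˢ t).ncard = s.ncard * t.ncard := by
  rw [← Nat.card_coe_set_eq, ← Nat.card_coe_set_eq, ← Nat.card_coe_set_eq,
    ← Nat.card_prod]
  exact Nat.card_congr (Equiv.Set.prod s t)


/-! ### Decomposition of `pil (insert a A)` by the position of `a` -/

def S1 (a : ℕ) (A : Finset ℕ) : Set PSet :=
  {P | IsPIL (insert a A) P ∧ twl a (listOf P a) = [] ∧ tll a (listOf P a) = []}
def S2 (a : ℕ) (A : Finset ℕ) : Set PSet :=
  {P | IsPIL (insert a A) P ∧ tll a (listOf P a) ≠ []}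
def S3 (a : ℕ) (A : Finset ℕ) : Set PSet :=
  {P | IsPIL (insert a A) P ∧ twl a (listOf P a) ≠ [] ∧ tll a (listOf P a) = []}

lemma pil_insert_eq_union : pil (insert a A) = S1 a A ∪ S2 a A ∪ S3 a A := by
  ext P
  simp only [pil, S1, S2, S3, Set.mem_setOf_eq, Set.mem_union]
  tauto

lemma erase_insert_self (ha : a ∉ A) : (insert a A).erase a = A := Finset.erase_insert ha

lemma singleton_split : twl a [a] = [] ∧ tll a [a] = [] := by
  simpa using split_eval a (u := []) [] ((List.not_mem_nil (a := a)))

lemma bijS1 (ha : a ∉ A) : Set.BijOn (del a) (S1 a A) (pil A) := by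
  have hmaps : Set.MapsTo (del a) (S1 a A) (pil A) := by
    rintro P ⟨hP, hu, hv⟩
    have h := del_isPIL hP (Finset.mem_insert_self a A)
    rwa [erase_insert_self ha] at h
  have hSla : ∀ P ∈ S1 a A, listOf P a = [a] := by
    rintro P ⟨hP, hu, hv⟩
    have hsp := split_of_mem (hP.mem_listOf (Finset.mem_insert_self a A))
    rw [hsp.1, hu, hv]
    rfl
  have hdel : ∀ P ∈ S1 a A, del a P = P.erase [a] := by
    intro P hPS
    rw [del, hSla P hPS, if_pos (by simp)]
  refine Set.InvOn.bijOn (f' := fun Q => insert [a] Q) ⟨?_, ?_⟩ hmaps ?_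
  · intro P hPS
    rw [hdel P hPS]
    have : ([a] : List ℕ) ∈ P := hSla P hPS ▸ hPS.1.listOf_mem (Finset.mem_insert_self a A)
    exact Finset.insert_erase this
  · intro Q hQ
    have hQ' := insert_singleton_isPIL hQ ha
    have hlo : listOf (insert [a] Q) a = [a] :=
      hQ'.listOf_eq (Finset.mem_insert_self _ _) (by simp)
    rw [del, hlo, if_pos (by simp)]
    exact Finset.erase_insert (not_mem_of_elem hQ ha (by simp))
  · intro Q hQ
    have hQ' := insert_singleton_isPIL hQ ha
    have hlo : listOf (insert [a] Q) a = [a] :=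
      hQ'.listOf_eq (Finset.mem_insert_self _ _) (by simp)
    exact ⟨hQ', by rw [hlo]; exact singleton_split.1, by rw [hlo]; exact singleton_split.2⟩


lemma perm_concat (m : List ℕ) (a : ℕ) : (m ++ [a]).Perm (a :: m) := by
  simpa using @List.perm_middle ℕ a m []

lemma erase_concat {m : List ℕ} (hm : a ∉ m) : (m ++ [a]).erase a = m := by
  simpa using erase_mid (v := []) hm

lemma bijS3 (ha : a ∉ A) :
    Set.BijOn (fun P => (del a P, (listOf P a).erase a)) (S3 a A) (mks A) := by
  have key : ∀ P ∈ S3 a A, listOf P a = twl a (listOf P a) ++ [a] ∧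
      (listOf P a).erase a = twl a (listOf P a) ∧ a ∉ twl a (listOf P a) := by
    rintro P ⟨hP, hu, hv⟩
    have hsp := split_of_mem (hP.mem_listOf (Finset.mem_insert_self a A))
    constructor
    · conv_lhs => rw [hsp.1, hv]
    · refine ⟨?_, hsp.2⟩
      conv_lhs => rw [hsp.1, hv]
      exact erase_concat hsp.2
  have hmaps : Set.MapsTo (fun P => (del a P, (listOf P a).erase a)) (S3 a A) (mks A) := by
    rintro P hPS
    obtain ⟨hP, hu, hv⟩ := hPS
    obtain ⟨hsplit, herase, hnm⟩ := key P ⟨hP, hu, hv⟩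
    have hdel := del_isPIL hP (Finset.mem_insert_self a A)
    rw [erase_insert_self ha] at hdel
    refine ⟨hdel, ?_⟩
    have hne : (listOf P a).erase a ≠ [] := by rw [herase]; exact hu
    show (listOf P a).erase a ∈ del a P
    rw [del_eq_rep hne]
    exact Finset.mem_insert_self _ _
  refine Set.InvOn.bijOn (f' := fun q => rep q.1 q.2 (q.2 ++ [a])) ⟨?_, ?_⟩ hmaps ?_
  · rintro P hPS
    obtain ⟨hP, hu, hv⟩ := hPS
    obtain ⟨hsplit, herase, hnm⟩ := key P ⟨hP, hu, hv⟩
    have hℓ : listOf P a ∈ P := hP.listOf_mem (Finset.mem_insert_self a A)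
    have hne : (listOf P a).erase a ≠ [] := by rw [herase]; exact hu
    show rep (del a P) ((listOf P a).erase a) ((listOf P a).erase a ++ [a]) = P
    rw [del_eq_rep hne]
    simp only [rep]
    rw [Finset.erase_insert (erase_not_mem_erase hP hℓ hne)]
    rw [herase, ← hsplit]
    exact Finset.insert_erase hℓ
  · rintro ⟨Q, m⟩ ⟨hQ, hm⟩
    have ham : a ∉ m := fun h => ha (hQ.mem_ground hm h)
    have hperm := perm_concat m a
    have her : (m ++ [a]).erase a = m := erase_concat ham
    have hR := rep_isPIL hQ hm hperm ha
    have hlo : listOf (rep Q m (m ++ [a])) a = m ++ [a] :=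
      hR.listOf_eq (Finset.mem_insert_self _ _) (by simp)
    show (del a (rep Q m (m ++ [a])), (listOf (rep Q m (m ++ [a])) a).erase a) = (Q, m)
    rw [del_rep hQ hm hperm ha her, hlo, her]
  · rintro ⟨Q, m⟩ ⟨hQ, hm⟩
    have ham : a ∉ m := fun h => ha (hQ.mem_ground hm h)
    have hperm := perm_concat m a
    have hR := rep_isPIL hQ hm hperm ha
    have hlo : listOf (rep Q m (m ++ [a])) a = m ++ [a] :=
      hR.listOf_eq (Finset.mem_insert_self _ _) (by simp)
    refine ⟨hR, ?_, ?_⟩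
    · rw [hlo]
      have : twl a (m ++ [a]) = m := by simpa using twl_eval a (u := m) [] ham
      rw [this]
      exact hQ.ne_nil hm
    · rw [hlo]
      simpa using tll_eval a (u := m) [] ham


lemma bijS2 (ha : a ∉ A) :
    Set.BijOn (fun P => (del a P, (tll a (listOf P a)).headI)) (S2 a A) (prs A) := by
  -- facts about elements of S2
  have key : ∀ P ∈ S2 a A, ∃ u x v',
      listOf P a = u ++ a :: x :: v' ∧ a ∉ u ∧ a ∉ (x :: v' : List ℕ) ∧
      twl a (listOf P a) = u ∧ tll a (listOf P a) = x :: v' := by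
    rintro P ⟨hP, hv⟩
    have haℓ := hP.mem_listOf (Finset.mem_insert_self a A)
    have hsp := split_of_mem haℓ
    obtain ⟨x, v', hxv⟩ : ∃ x v', tll a (listOf P a) = x :: v' := by
      cases h : tll a (listOf P a) with
      | nil => exact absurd h hv
      | cons z t => exact ⟨z, t, rfl⟩
    have hnd : (listOf P a).Nodup := hP.nodup (hP.listOf_mem (Finset.mem_insert_self a A))
    have hℓeq : listOf P a = twl a (listOf P a) ++ a :: x :: v' := by
      conv_lhs => rw [hsp.1, hxv]
    have hnd2 : (twl a (listOf P a) ++ a :: x :: v').Nodup := hℓeq ▸ hnd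
    exact ⟨twl a (listOf P a), x, v', hℓeq, hsp.2, (not_mem_sides hnd2).2,
      rfl, hxv⟩
  have hmaps : Set.MapsTo (fun P => (del a P, (tll a (listOf P a)).headI)) (S2 a A) (prs A) := by
    rintro P hPS
    obtain ⟨u, x, v', hℓeq, hau, hav, htw, htl⟩ := key P hPS
    obtain ⟨hP, hv⟩ := hPS
    have hdel := del_isPIL hP (Finset.mem_insert_self a A)
    rw [erase_insert_self ha] at hdel
    refine ⟨hdel, ?_⟩
    show (tll a (listOf P a)).headI ∈ A
    rw [htl]
    have hxA : x ∈ insert a A := hP.mem_ground (hP.listOf_mem (Finset.mem_insert_self a A))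
      (by rw [hℓeq]; exact List.mem_append_right _ (by simp))
    have hxa : x ≠ a := fun h => hav (h ▸ (List.mem_cons_self (a := x) (l := v')))
    simpa [List.headI] using (Finset.mem_insert.1 hxA).resolve_left hxa
  refine Set.InvOn.bijOn
    (f' := fun q => rep q.1 (listOf q.1 q.2)
      (twl q.2 (listOf q.1 q.2) ++ a :: q.2 :: tll q.2 (listOf q.1 q.2))) ⟨?_, ?_⟩ hmaps ?_
  · rintro P hPS
    obtain ⟨u, x, v', hℓeq, hau, hav, htw, htl⟩ := key P hPS
    obtain ⟨hP, hv⟩ := hPS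
    have hℓ : listOf P a ∈ P := hP.listOf_mem (Finset.mem_insert_self a A)
    have herase : (listOf P a).erase a = u ++ x :: v' := by
      rw [hℓeq]; exact erase_mid hau
    have hne : (listOf P a).erase a ≠ [] := by rw [herase]; simp
    have hdelP : del a P = insert (u ++ x :: v') (P.erase (listOf P a)) := by
      rw [del_eq_rep hne, herase]
    have hdel := del_isPIL hP (Finset.mem_insert_self a A)
    rw [erase_insert_self ha] at hdel
    have hxmem : x ∈ u ++ x :: v' := List.mem_append_right _ ((List.mem_cons_self (a := x) (l := v')))
    have hmem2 : (u ++ x :: v') ∈ del a P := by rw [hdelP]; exact Finset.mem_insert_self _ _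
    have hlo2 : listOf (del a P) x = u ++ x :: v' := hdel.listOf_eq hmem2 hxmem
    have hxu : x ∉ u := by
      have hnd : (listOf P a).Nodup := hP.nodup hℓ
      rw [hℓeq] at hnd
      have hd := List.disjoint_of_nodup_append hnd
      exact fun h => hd h (List.mem_cons_of_mem a ((List.mem_cons_self (a := x) (l := v'))))
    have hhead : (tll a (listOf P a)).headI = x := by rw [htl]; rfl
    show rep (del a P) (listOf (del a P) ((tll a (listOf P a)).headI))
      (twl ((tll a (listOf P a)).headI) (listOf (del a P) ((tll a (listOf P a)).headI))
        ++ a :: ((tll a (listOf P a)).headI) ::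
        tll ((tll a (listOf P a)).headI) (listOf (del a P) ((tll a (listOf P a)).headI))) = P
    rw [hhead, hlo2, twl_eval x v' hxu, tll_eval x v' hxu]
    simp only [rep]
    rw [hdelP, Finset.erase_insert (by rw [← herase]; exact erase_not_mem_erase hP hℓ hne)]
    rw [show u ++ a :: x :: v' = listOf P a from hℓeq.symm]
    exact Finset.insert_erase hℓ
  · rintro ⟨Q, x⟩ ⟨hQ, hx⟩
    have hℓx : listOf Q x ∈ Q := hQ.listOf_mem hx
    have hxl : x ∈ listOf Q x := hQ.mem_listOf hx
    have hsp := split_of_mem hxl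
    have hau' : a ∉ twl x (listOf Q x) := by
      intro h
      have : a ∈ listOf Q x := by rw [hsp.1]; exact List.mem_append_left _ h
      exact ha (hQ.mem_ground hℓx this)
    have hperm : (twl x (listOf Q x) ++ a :: x :: tll x (listOf Q x)).Perm (a :: listOf Q x) := by
      have := @List.perm_middle ℕ a (twl x (listOf Q x)) (x :: tll x (listOf Q x))
      rw [← hsp.1] at this
      exact this
    have her : (twl x (listOf Q x) ++ a :: x :: tll x (listOf Q x)).erase a = listOf Q x := by
      rw [erase_mid hau', ← hsp.1]
    have hR := rep_isPIL hQ hℓx hperm ha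
    have halo : listOf (rep Q (listOf Q x) (twl x (listOf Q x) ++ a :: x :: tll x (listOf Q x))) a
        = twl x (listOf Q x) ++ a :: x :: tll x (listOf Q x) :=
      hR.listOf_eq (Finset.mem_insert_self _ _)
        (List.mem_append_right _ ((List.mem_cons_self (a := _) (l := _))))
    show (del a (rep Q (listOf Q x) (twl x (listOf Q x) ++ a :: x :: tll x (listOf Q x))),
      (tll a (listOf (rep Q (listOf Q x) (twl x (listOf Q x) ++ a :: x :: tll x (listOf Q x))) a)).headI)
      = (Q, x)
    rw [del_rep hQ hℓx hperm ha her, halo, tll_eval a _ hau']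
    rfl
  · rintro ⟨Q, x⟩ ⟨hQ, hx⟩
    have hℓx : listOf Q x ∈ Q := hQ.listOf_mem hx
    have hxl : x ∈ listOf Q x := hQ.mem_listOf hx
    have hsp := split_of_mem hxl
    have hau' : a ∉ twl x (listOf Q x) := by
      intro h
      have : a ∈ listOf Q x := by rw [hsp.1]; exact List.mem_append_left _ h
      exact ha (hQ.mem_ground hℓx this)
    have hperm : (twl x (listOf Q x) ++ a :: x :: tll x (listOf Q x)).Perm (a :: listOf Q x) := by
      have := @List.perm_middle ℕ a (twl x (listOf Q x)) (x :: tll x (listOf Q x))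
      rw [← hsp.1] at this
      exact this
    have hR := rep_isPIL hQ hℓx hperm ha
    have halo : listOf (rep Q (listOf Q x) (twl x (listOf Q x) ++ a :: x :: tll x (listOf Q x))) a
        = twl x (listOf Q x) ++ a :: x :: tll x (listOf Q x) :=
      hR.listOf_eq (Finset.mem_insert_self _ _)
        (List.mem_append_right _ ((List.mem_cons_self (a := _) (l := _))))
    refine ⟨hR, ?_⟩
    rw [halo, tll_eval a _ hau']
    simp


lemma S1_sub : S1 a A ⊆ pil (insert a A) := fun P hP => hP.1
lemma S2_sub : S2 a A ⊆ pil (insert a A) := fun P hP => hP.1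
lemma S3_sub : S3 a A ⊆ pil (insert a A) := fun P hP => hP.1

lemma L1 (ha : a ∉ A) :
    (pil (insert a A)).ncard = (pil A).ncard + (prs A).ncard + (mks A).ncard := by
  have hfin := pil_finite (insert a A)
  have hf1 : (S1 a A).Finite := hfin.subset S1_sub
  have hf2 : (S2 a A).Finite := hfin.subset S2_sub
  have hf3 : (S3 a A).Finite := hfin.subset S3_sub
  have hd12 : Disjoint (S1 a A) (S2 a A) := by
    rw [Set.disjoint_left]
    rintro P ⟨_, _, h1⟩ ⟨_, h2⟩
    exact h2 h1
  have hd123 : Disjoint (S1 a A ∪ S2 a A) (S3 a A) := by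
    rw [Set.disjoint_left]
    rintro P hP ⟨_, h1, h2⟩
    rcases hP with ⟨_, h3, _⟩ | ⟨_, h3⟩
    · exact h1 h3
    · exact h3 h2
  rw [pil_insert_eq_union, Set.ncard_union_eq hd123 (hf1.union hf2) hf3,
    Set.ncard_union_eq hd12 hf1 hf2, bij_ncard (bijS1 ha), bij_ncard (bijS2 ha),
    bij_ncard (bijS3 ha)]

/-! ### Decomposition of `prs A` by whether the marked element heads its list -/

def T1 (A : Finset ℕ) : Set (PSet × ℕ) :=
  {q | (IsPIL A q.1 ∧ q.2 ∈ A) ∧ (listOf q.1 q.2).headI = q.2}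
def T2 (A : Finset ℕ) : Set (PSet × ℕ) :=
  {q | (IsPIL A q.1 ∧ q.2 ∈ A) ∧ (listOf q.1 q.2).headI ≠ q.2}

lemma prs_eq_union : prs A = T1 A ∪ T2 A := by
  ext q
  simp only [prs, T1, T2, Set.mem_setOf_eq, Set.mem_union]
  tauto

lemma headI_mem {l : List ℕ} (h : l ≠ []) : l.headI ∈ l := by
  cases l with
  | nil => exact absurd rfl h
  | cons z t => exact (List.mem_cons_self (a := z) (l := t))

lemma bijT1 : Set.BijOn (fun q : PSet × List ℕ => (q.1, q.2.headI)) (mks A) (T1 A) := by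
  have hmaps : Set.MapsTo (fun q : PSet × List ℕ => (q.1, q.2.headI)) (mks A) (T1 A) := by
    rintro ⟨P, l⟩ ⟨hP, hl⟩
    have hne := hP.ne_nil hl
    have hmem := headI_mem hne
    exact ⟨⟨hP, hP.mem_ground hl hmem⟩, by rw [hP.listOf_eq hl hmem]⟩
  refine Set.InvOn.bijOn (f' := fun q : PSet × ℕ => (q.1, listOf q.1 q.2)) ⟨?_, ?_⟩ hmaps ?_
  · rintro ⟨P, l⟩ ⟨hP, hl⟩
    have hne := hP.ne_nil hl
    show (P, listOf P l.headI) = (P, l)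
    rw [hP.listOf_eq hl (headI_mem hne)]
  · rintro ⟨P, x⟩ ⟨⟨hP, hx⟩, hhead⟩
    show (P, (listOf P x).headI) = (P, x)
    rw [hhead]
  · rintro ⟨P, x⟩ ⟨⟨hP, hx⟩, hhead⟩
    exact ⟨hP, hP.listOf_mem hx⟩


/-- delete `x` and mark its predecessor -/
noncomputable def Dmap (x : ℕ) (P : PSet) : PSet × ℕ :=
  (del x P, (twl x (listOf P x)).getLastD 0)

/-- insert `x` right after the marked element -/
noncomputable def Emap (x : ℕ) (q : PSet × ℕ) : PSet :=
  rep q.1 (listOf q.1 q.2) (twl q.2 (listOf q.1 q.2) ++ q.2 :: x :: tll q.2 (listOf q.1 q.2))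

lemma fiberP (hx : x ∈ A) (hP : IsPIL A P) (hh : (listOf P x).headI ≠ x) :
    Dmap x P ∈ prs (A.erase x) ∧ Emap x (Dmap x P) = P := by
  have hℓ : listOf P x ∈ P := hP.listOf_mem hx
  have hxl : x ∈ listOf P x := hP.mem_listOf hx
  have hsp := split_of_mem hxl
  have hund : (listOf P x).Nodup := hP.nodup hℓ
  -- the prefix is nonempty
  have hune : twl x (listOf P x) ≠ [] := by
    intro h
    apply hh
    conv_lhs => rw [hsp.1, h]
    rfl
  obtain ⟨w, y, hwy⟩ := (List.eq_nil_or_concat' (twl x (listOf P x))).resolve_left hune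
  have hℓeq : listOf P x = w ++ y :: x :: tll x (listOf P x) := by
    conv_lhs => rw [hsp.1, hwy]
    simp
  have hmark : (twl x (listOf P x)).getLastD 0 = y := by rw [hwy]; exact List.getLastD_concat
  have herase : (listOf P x).erase x = w ++ y :: tll x (listOf P x) := by
    conv_lhs => rw [hsp.1, hwy]
    rw [erase_mid (a := x) (u := w ++ [y]) (by rw [← hwy]; exact hsp.2)]
    simp
  have hne : (listOf P x).erase x ≠ [] := by rw [herase]; simp
  have hdelP : del x P = insert (w ++ y :: tll x (listOf P x)) (P.erase (listOf P x)) := by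
    rw [del_eq_rep hne, herase]
  have hdel := del_isPIL hP hx
  have hyA : y ∈ A.erase x := by
    have hyu : y ∈ twl x (listOf P x) := by rw [hwy]; simp
    have hyl : y ∈ listOf P x := by rw [hsp.1]; exact List.mem_append_left _ hyu
    exact Finset.mem_erase.2 ⟨fun h => hsp.2 (h ▸ hyu), hP.mem_ground hℓ hyl⟩
  constructor
  · exact ⟨hdel, by rw [Dmap, hmark]; exact hyA⟩
  · -- Emap (del x P, y) = P
    have hmem2 : (w ++ y :: tll x (listOf P x)) ∈ del x P := by
      rw [hdelP]; exact Finset.mem_insert_self _ _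
    have hymem : y ∈ w ++ y :: tll x (listOf P x) := List.mem_append_right _ ((List.mem_cons_self (a := _) (l := _)))
    have hlo2 : listOf (del x P) y = w ++ y :: tll x (listOf P x) := hdel.listOf_eq hmem2 hymem
    have hndwy : (w ++ y :: x :: tll x (listOf P x)).Nodup := hℓeq ▸ hund
    have hyw : y ∉ w := (not_mem_sides hndwy).1
    show Emap x (del x P, (twl x (listOf P x)).getLastD 0) = P
    rw [Emap]
    simp only [hmark, hlo2]
    rw [twl_eval y _ hyw, tll_eval y _ hyw]
    simp only [rep]
    rw [hdelP, Finset.erase_insert (by rw [← herase]; exact erase_not_mem_erase hP hℓ hne)]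
    rw [show w ++ y :: x :: tll x (listOf P x) = listOf P x from hℓeq.symm]
    exact Finset.insert_erase hℓ

lemma fiberQ (hx : x ∈ A) (hQ : IsPIL (A.erase x) Q) (hy : y ∈ A.erase x) :
    (IsPIL A (Emap x (Q, y)) ∧ (listOf (Emap x (Q, y)) x).headI ≠ x) ∧
      Dmap x (Emap x (Q, y)) = (Q, y) := by
  have hℓy : listOf Q y ∈ Q := hQ.listOf_mem hy
  have hyl : y ∈ listOf Q y := hQ.mem_listOf hy
  have hsp := split_of_mem hyl
  have hxnl : x ∉ listOf Q y := by
    intro h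
    exact Finset.notMem_erase x A (hQ.mem_ground hℓy h)
  have hxu : x ∉ twl y (listOf Q y) ++ [y] := by
    intro h
    rcases List.mem_append.1 h with h | h
    · exact hxnl (by rw [hsp.1]; exact List.mem_append_left _ h)
    · have : x = y := by simpa using h
      exact (Finset.mem_erase.1 hy).1 this.symm
  have hl'eq : twl y (listOf Q y) ++ y :: x :: tll y (listOf Q y)
      = (twl y (listOf Q y) ++ [y]) ++ x :: tll y (listOf Q y) := by simp
  have hperm : (twl y (listOf Q y) ++ y :: x :: tll y (listOf Q y)).Perm (x :: listOf Q y) := by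
    rw [hl'eq]
    have h2 := @List.perm_middle ℕ x (twl y (listOf Q y) ++ [y]) (tll y (listOf Q y))
    have h3 : (twl y (listOf Q y) ++ [y]) ++ tll y (listOf Q y) = listOf Q y := by
      conv_rhs => rw [hsp.1]
      simp
    rwa [h3] at h2
  have her : (twl y (listOf Q y) ++ y :: x :: tll y (listOf Q y)).erase x = listOf Q y := by
    rw [hl'eq, erase_mid hxu]
    conv_rhs => rw [hsp.1]
    simp
  have hR0 := rep_isPIL hQ hℓy hperm (Finset.notMem_erase x A)
  rw [Finset.insert_erase hx] at hR0
  have hxin : x ∈ twl y (listOf Q y) ++ y :: x :: tll y (listOf Q y) :=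
    List.mem_append_right _ (List.mem_cons_of_mem _ ((List.mem_cons_self (a := _) (l := _))))
  have hlo : listOf (Emap x (Q, y)) x = twl y (listOf Q y) ++ y :: x :: tll y (listOf Q y) := by
    rw [Emap]
    exact hR0.listOf_eq (Finset.mem_insert_self _ _) hxin
  have hhead : (twl y (listOf Q y) ++ y :: x :: tll y (listOf Q y)).headI ≠ x := by
    cases hu : twl y (listOf Q y) with
    | nil =>
      simp only [hu, List.nil_append, List.headI]
      exact (Finset.mem_erase.1 hy).1
    | cons z t =>
      simp only [hu, List.cons_append, List.headI]
      intro h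
      apply hxnl
      rw [hsp.1, ← h, hu]
      exact List.mem_append_left _ ((List.mem_cons_self (a := z) (l := t)))
  constructor
  · exact ⟨by rw [Emap]; exact hR0, by rw [hlo]; exact hhead⟩
  · have hdel : del x (Emap x (Q, y)) = Q := by
      rw [Emap]
      exact del_rep hQ hℓy hperm (Finset.notMem_erase x A) her
    have hmark : (twl x (listOf (Emap x (Q, y)) x)).getLastD 0 = y := by
      rw [hlo, hl'eq, twl_eval x _ hxu]
      exact List.getLastD_concat
    rw [Dmap, hdel, hmark]


/-! ### Relabeling -/

def Phi (sig : ℕ → ℕ) (q : PSet × ℕ) : PSet × ℕ :=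
  (q.1.image (fun l => l.map sig), sig q.2)

lemma relabel_isPIL {B C : Finset ℕ} {sig tau : ℕ → ℕ}
    (hsig : ∀ z ∈ B, sig z ∈ C) (htau : ∀ z ∈ C, tau z ∈ B)
    (hts : ∀ z ∈ B, tau (sig z) = z) (hst : ∀ z ∈ C, sig (tau z) = z)
    (hP : IsPIL B P) : IsPIL C (P.image (fun l => l.map sig)) := by
  have hinj : ∀ z ∈ B, ∀ z' ∈ B, sig z = sig z' → z = z' := by
    intro z hz z' hz' h
    rw [← hts z hz, ← hts z' hz', h]
  refine ⟨?_, ?_, ?_⟩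
  · intro m hm
    obtain ⟨l, hl, rfl⟩ := Finset.mem_image.1 hm
    constructor
    · exact (hP.nodup hl).map_on (fun z hz z' hz' h =>
        hinj z (hP.mem_ground hl hz) z' (hP.mem_ground hl hz') h)
    · simp only [ne_eq, List.map_eq_nil_iff]
      exact hP.ne_nil hl
  · intro m hm m' hm' hne
    obtain ⟨l, hl, rfl⟩ := Finset.mem_image.1 hm
    obtain ⟨l', hl', rfl⟩ := Finset.mem_image.1 hm'
    have hll' : l ≠ l' := fun h => hne (h ▸ rfl)
    have hdisj := hP.disj hl hl' hll'
    refine Finset.disjoint_left.2 fun z hz hz' => ?_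
    obtain ⟨w, hw, rfl⟩ := List.mem_map.1 (List.mem_toFinset.1 hz)
    obtain ⟨w', hw', heq⟩ := List.mem_map.1 (List.mem_toFinset.1 hz')
    have : w' = w := hinj w' (hP.mem_ground hl' hw') w (hP.mem_ground hl hw) heq
    subst this
    exact Finset.disjoint_left.1 hdisj (List.mem_toFinset.2 hw) (List.mem_toFinset.2 hw')
  · ext z
    simp only [Finset.mem_biUnion, Finset.mem_image, List.mem_toFinset]
    constructor
    · rintro ⟨m, ⟨l, hl, rfl⟩, hz⟩
      obtain ⟨w, hw, rfl⟩ := List.mem_map.1 hz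
      exact hsig w (hP.mem_ground hl hw)
    · intro hz
      obtain ⟨l, hl, hwl⟩ := hP.exists_list (htau z hz)
      exact ⟨l.map sig, ⟨l, hl, rfl⟩, List.mem_map.2 ⟨tau z, hwl, hst z hz⟩⟩

lemma relabel_mapsTo {B C : Finset ℕ} {sig tau : ℕ → ℕ}
    (hsig : ∀ z ∈ B, sig z ∈ C) (htau : ∀ z ∈ C, tau z ∈ B)
    (hts : ∀ z ∈ B, tau (sig z) = z) (hst : ∀ z ∈ C, sig (tau z) = z) :
    Set.MapsTo (Phi sig) (prs B) (prs C) := by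
  rintro ⟨P, z⟩ ⟨hP, hz⟩
  exact ⟨relabel_isPIL hsig htau hts hst hP, hsig z hz⟩

lemma relabel_leftInv {B : Finset ℕ} {sig tau : ℕ → ℕ}
    (hts : ∀ z ∈ B, tau (sig z) = z) :
    ∀ q ∈ prs B, Phi tau (Phi sig q) = q := by
  rintro ⟨P, z⟩ ⟨hP, hz⟩
  have h1 : (P.image (fun l => l.map sig)).image (fun l => l.map tau) = P := by
    rw [Finset.image_image]
    have h2 : ∀ l ∈ P, ((fun l : List ℕ => l.map tau) ∘ fun l : List ℕ => l.map sig) l = id l := by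
      intro l hl
      simp only [Function.comp_apply, List.map_map, id_eq]
      have h3 : ∀ w ∈ l, (tau ∘ sig) w = id w := fun w hww => hts w (hP.mem_ground hl hww)
      rw [List.map_congr_left h3, List.map_id]
    rw [Finset.image_congr h2, Finset.image_id]
  simp only [Phi]
  rw [h1, hts z hz]

lemma exists_relabel {B C : Finset ℕ} (h : B.card = C.card) :
    ∃ sig tau : ℕ → ℕ, (∀ z ∈ B, sig z ∈ C) ∧ (∀ z ∈ C, tau z ∈ B) ∧
      (∀ z ∈ B, tau (sig z) = z) ∧ (∀ z ∈ C, sig (tau z) = z) := by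
  classical
  set e := Finset.equivOfCardEq h
  refine ⟨fun z => if hz : z ∈ B then (e ⟨z, hz⟩ : ℕ) else 0,
    fun z => if hz : z ∈ C then (e.symm ⟨z, hz⟩ : ℕ) else 0, ?_, ?_, ?_, ?_⟩
  · intro z hz
    dsimp only
    rw [dif_pos hz]
    exact (e ⟨z, hz⟩).2
  · intro z hz
    dsimp only
    rw [dif_pos hz]
    exact (e.symm ⟨z, hz⟩).2
  · intro z hz
    dsimp only
    rw [dif_pos hz, dif_pos (e ⟨z, hz⟩).2]
    have h4 : (⟨(e ⟨z, hz⟩ : ℕ), (e ⟨z, hz⟩).2⟩ : {x // x ∈ C}) = e ⟨z, hz⟩ := rfl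
    rw [h4, Equiv.symm_apply_apply]
  · intro z hz
    dsimp only
    rw [dif_pos hz, dif_pos (e.symm ⟨z, hz⟩).2]
    have h4 : (⟨(e.symm ⟨z, hz⟩ : ℕ), (e.symm ⟨z, hz⟩).2⟩ : {x // x ∈ B}) = e.symm ⟨z, hz⟩ := rfl
    rw [h4, Equiv.apply_symm_apply]

lemma prs_ncard_eq {B C : Finset ℕ} (h : B.card = C.card) :
    (prs B).ncard = (prs C).ncard := by
  obtain ⟨sig, tau, hsig, htau, hts, hst⟩ := exists_relabel h
  exact bij_ncard (Set.InvOn.bijOn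
    ⟨relabel_leftInv hts, fun q hq => relabel_leftInv (B := C) (sig := tau) (tau := sig) hst q hq⟩
    (relabel_mapsTo hsig htau hts hst) (relabel_mapsTo htau hsig hst hts))


noncomputable def sigx (A C : Finset ℕ) (x : ℕ) : ℕ → ℕ :=
  if h : (A.erase x).card = C.card then (exists_relabel h).choose else id
noncomputable def taux (A C : Finset ℕ) (x : ℕ) : ℕ → ℕ :=
  if h : (A.erase x).card = C.card then (exists_relabel h).choose_spec.choose else id

lemma sigtaux_spec {C : Finset ℕ} (h : (A.erase x).card = C.card) :
    (∀ z ∈ A.erase x, sigx A C x z ∈ C) ∧ (∀ z ∈ C, taux A C x z ∈ A.erase x) ∧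
      (∀ z ∈ A.erase x, taux A C x (sigx A C x z) = z) ∧
      (∀ z ∈ C, sigx A C x (taux A C x z) = z) := by
  rw [sigx, taux, dif_pos h, dif_pos h]
  exact (exists_relabel h).choose_spec.choose_spec

lemma bijT2 {C : Finset ℕ} (hcard : ∀ x ∈ A, (A.erase x).card = C.card) :
    Set.BijOn (fun q : PSet × ℕ => (q.2, Phi (sigx A C q.2) (Dmap q.2 q.1)))
      (T2 A) ((↑A : Set ℕ) ×ˢ prs C) := by
  have hmaps : Set.MapsTo (fun q : PSet × ℕ => (q.2, Phi (sigx A C q.2) (Dmap q.2 q.1)))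
      (T2 A) ((↑A : Set ℕ) ×ˢ prs C) := by
    rintro ⟨P, x⟩ ⟨⟨hP, hx⟩, hh⟩
    obtain ⟨hs1, hs2, hs3, hs4⟩ := sigtaux_spec (hcard x hx)
    have hD := (fiberP hx hP hh).1
    exact ⟨hx, relabel_mapsTo hs1 hs2 hs3 hs4 hD⟩
  refine Set.InvOn.bijOn
    (f' := fun r : ℕ × (PSet × ℕ) => (Emap r.1 (Phi (taux A C r.1) r.2), r.1)) ⟨?_, ?_⟩ hmaps ?_
  · rintro ⟨P, x⟩ ⟨⟨hP, hx⟩, hh⟩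
    obtain ⟨hs1, hs2, hs3, hs4⟩ := sigtaux_spec (hcard x hx)
    have hD := (fiberP hx hP hh).1
    show (Emap x (Phi (taux A C x) (Phi (sigx A C x) (Dmap x P))), x) = (P, x)
    rw [relabel_leftInv hs3 _ hD, (fiberP hx hP hh).2]
  · rintro ⟨x, p⟩ ⟨hx, hp⟩
    obtain ⟨hs1, hs2, hs3, hs4⟩ := sigtaux_spec (hcard x hx)
    have hx' : x ∈ A := hx
    have hq' : Phi (taux A C x) p ∈ prs (A.erase x) := relabel_mapsTo hs2 hs1 hs4 hs3 hp
    obtain ⟨hOK, hDE⟩ := fiberQ hx' hq'.1 hq'.2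
    show (x, Phi (sigx A C x) (Dmap x (Emap x (Phi (taux A C x) p)))) = (x, p)
    have hpair : (Phi (taux A C x) p) = ((Phi (taux A C x) p).1, (Phi (taux A C x) p).2) := rfl
    rw [show Emap x (Phi (taux A C x) p)
        = Emap x ((Phi (taux A C x) p).1, (Phi (taux A C x) p).2) from rfl]
    rw [hDE]
    rw [show ((Phi (taux A C x) p).1, (Phi (taux A C x) p).2) = Phi (taux A C x) p from rfl]
    rw [relabel_leftInv (B := C) hs4 _ hp]
  · rintro ⟨x, p⟩ ⟨hx, hp⟩
    obtain ⟨hs1, hs2, hs3, hs4⟩ := sigtaux_spec (hcard x hx)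
    have hx' : x ∈ A := hx
    have hq' : Phi (taux A C x) p ∈ prs (A.erase x) := relabel_mapsTo hs2 hs1 hs4 hs3 hp
    obtain ⟨hOK, hDE⟩ := fiberQ hx' hq'.1 hq'.2
    exact ⟨⟨hOK.1, hx'⟩, hOK.2⟩

lemma T1_sub : T1 A ⊆ prs A := fun q hq => hq.1
lemma T2_sub : T2 A ⊆ prs A := fun q hq => hq.1

lemma L2 {C : Finset ℕ} (hcard : ∀ x ∈ A, (A.erase x).card = C.card) :
    (prs A).ncard = (mks A).ncard + A.card * (prs C).ncard := by
  have hfin := prs_finite A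
  have hf1 : (T1 A).Finite := hfin.subset T1_sub
  have hf2 : (T2 A).Finite := hfin.subset T2_sub
  have hd : Disjoint (T1 A) (T2 A) := by
    rw [Set.disjoint_left]
    rintro q ⟨_, h1⟩ ⟨_, h2⟩
    exact h2 h1
  rw [prs_eq_union, Set.ncard_union_eq hd hf1 hf2, ← bij_ncard (bijT1 (A := A)),
    bij_ncard (bijT2 hcard), ncard_prod, Set.ncard_coe_finset]

lemma L3 : (prs A).ncard = A.card * (pil A).ncard := by
  have : prs A = (pil A) ×ˢ (↑A : Set ℕ) := by
    ext ⟨P, x⟩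
    simp [prs, pil, Set.mem_prod]
  rw [this, ncard_prod, Set.ncard_coe_finset, Nat.mul_comm]

lemma pil_empty : pil (∅ : Finset ℕ) = {(∅ : PSet)} := by
  ext P
  simp only [pil, Set.mem_setOf_eq, Set.mem_singleton_iff]
  constructor
  · intro hP
    by_contra hne
    obtain ⟨l, hl⟩ := Finset.nonempty_iff_ne_empty.2 hne
    obtain ⟨z, hz⟩ := List.exists_mem_of_ne_nil _ (hP.ne_nil hl)
    exact absurd (hP.mem_ground hl hz) (Finset.notMem_empty z)
  · rintro rfl
    exact ⟨by simp, by simp, by simp⟩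


lemma pilCount_eq (k : ℕ) : pilCount k = (pil (Finset.Icc 1 k)).ncard := rfl

lemma pilCount_zero : pilCount 0 = 1 := by
  rw [pilCount_eq, show Finset.Icc 1 0 = (∅ : Finset ℕ) from Finset.Icc_eq_empty (by omega),
    pil_empty]
  exact Set.ncard_singleton _

lemma fPIL_eq (k : ℕ) : fPIL k = pilCount k := by
  cases k with
  | zero => exact pilCount_zero.symm
  | succ m => rfl

end PIL6

/-- For `n ≥ 1`, `f(n+1) + (n² - n) f(n-1) = (2n+1) f(n)`. -/
theorem statement6 (n : ℕ) (hn : 1 ≤ n) :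
    fPIL (n + 1) + (n ^ 2 - n) * fPIL (n - 1) = (2 * n + 1) * fPIL n := by
  classical
  obtain ⟨m, rfl⟩ : ∃ m, n = m + 1 := ⟨n - 1, (Nat.succ_pred_eq_of_pos hn).symm⟩
  set n := m + 1
  have hnm : n - 1 = m := rfl
  have ha : (n + 1) ∉ Finset.Icc 1 n := by simp [Finset.mem_Icc]
  have hA : Finset.Icc 1 (n + 1) = insert (n + 1) (Finset.Icc 1 n) := by
    ext z
    simp only [Finset.mem_Icc, Finset.mem_insert]
    omega
  have hcardA : (Finset.Icc 1 n).card = n := by rw [Nat.card_Icc]; omega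
  have hcardB : (Finset.Icc 1 m).card = m := by rw [Nat.card_Icc]; omega
  have hcard : ∀ x ∈ Finset.Icc 1 n, ((Finset.Icc 1 n).erase x).card = (Finset.Icc 1 m).card := by
    intro x hx
    rw [Finset.card_erase_of_mem hx, hcardA, hcardB]
    omega
  have e1 : pilCount (n + 1) = (PIL6.pil (Finset.Icc 1 n)).ncard
      + (PIL6.prs (Finset.Icc 1 n)).ncard + (PIL6.mks (Finset.Icc 1 n)).ncard := by
    rw [PIL6.pilCount_eq, hA, PIL6.L1 ha]
  have e2 : (PIL6.prs (Finset.Icc 1 n)).ncard = n * (PIL6.pil (Finset.Icc 1 n)).ncard := by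
    rw [PIL6.L3, hcardA]
  have e3 : (PIL6.prs (Finset.Icc 1 n)).ncard = (PIL6.mks (Finset.Icc 1 n)).ncard
      + n * (PIL6.prs (Finset.Icc 1 m)).ncard := by
    rw [PIL6.L2 hcard, hcardA]
  have e4 : (PIL6.prs (Finset.Icc 1 m)).ncard = m * (PIL6.pil (Finset.Icc 1 m)).ncard := by
    rw [PIL6.L3, hcardB]
  have hsq : n ^ 2 - n = n * m := by
    show (m + 1) ^ 2 - (m + 1) = (m + 1) * m
    rw [pow_two, Nat.mul_succ, Nat.add_sub_cancel]
  rw [PIL6.fPIL_eq, PIL6.fPIL_eq, PIL6.fPIL_eq, hnm, hsq]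
  have hp : pilCount n = (PIL6.pil (Finset.Icc 1 n)).ncard := PIL6.pilCount_eq n
  have hp' : pilCount m = (PIL6.pil (Finset.Icc 1 m)).ncard := PIL6.pilCount_eq m
  rw [hp, hp', e1, mul_assoc, ← e4]
  have hrhs : (2 * n + 1) * (PIL6.pil (Finset.Icc 1 n)).ncard
      = n * (PIL6.pil (Finset.Icc 1 n)).ncard + (n * (PIL6.pil (Finset.Icc 1 n)).ncard
        + (PIL6.pil (Finset.Icc 1 n)).ncard) := by ring
  rw [hrhs]
  set X := n * (PIL6.pil (Finset.Icc 1 n)).ncard with hX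
  set Y := n * (PIL6.prs (Finset.Icc 1 m)).ncard with hY
  omega


end
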